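/- For x̂ = Σ_{m,k} e_{m,k} and y = Σ_{m,k}(−1)^m e_{m,k}, the quadratic variation of x̂ + y along dyadic partitions satisfies, for every t ∈ [0,1], lim_n ⟨x̂+y⟩_t^{2n} = (4/3)t and lim_n ⟨x̂+y⟩_t^{2n+1} = (8/3)t. In particular, for t > 0 the limit of ⟨x̂+y⟩_t^n does not exist, even though ⟨x̂⟩_t = ⟨y⟩_t = t exist; hence the set of continuous functions admitting a quadratic variation along (𝕋_n) is not a vector space. -/

import Mathlib

noncomputable def e00 (t : ℝ) : ℝ := max (min t (1 - t)) 0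

noncomputable def e (m : ℕ) (k : ℤ) (t : ℝ) : ℝ :=
  (2 : ℝ) ^ (-(m : ℝ) / 2) * e00 ((2 : ℝ) ^ m * t - k)

noncomputable def xhat (t : ℝ) : ℝ :=
  ∑' m : ℕ, ∑ k ∈ Finset.range (2 ^ m), e m k t

noncomputable def yfun (t : ℝ) : ℝ :=
  ∑' m : ℕ, ∑ k ∈ Finset.range (2 ^ m), (-1 : ℝ) ^ m * e m k t

/-- Discrete quadratic variation of `z` up to time `t` along the `n`-th dyadic
partition (the point `s = 1` has successor `1` and contributes `0`). -/
noncomputable def qv (z : ℝ → ℝ) (n : ℕ) (t : ℝ) : ℝ :=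
  ∑ j ∈ Finset.range (2 ^ n),
    if (j : ℝ) * 2 ^ (-(n : ℤ)) ≤ t then
      (z ((j + 1 : ℝ) * 2 ^ (-(n : ℤ))) - z ((j : ℝ) * 2 ^ (-(n : ℤ)))) ^ 2
    else 0

/-!
On the grid `𝕋_n` the series `∑ c_m e_{m,k}` only sees the levels `m < n`, and its increment on
`[j 2^{-n}, (j+1) 2^{-n}]` is `∑_{m<n} a_m r_{n-1-m}(j)` with `a_m = c_m 2^{-m/2} 2^{m-n}` and
`r_i(j) = ±1` the sign of the `i`-th binary digit of `j`. Squaring and summing over `j ≤ t 2^n`,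
the diagonal terms give `t 2^{-n} ∑_{m<n} c_m² 2^m`, while for `i ≠ i'` the partial sums of
`r_i r_{i'}` stay bounded by `2^{min i i' + 1}`, so the cross terms are `O(n² 2^{-n})`.
For `x̂` and `y` we have `c_m² = 1` and the main term tends to `t`; for `x̂ + y` we have
`c_m = 1 + (-1)^m`, only the even levels survive, and the main term oscillates between
`4t/3` (even `n`) and `8t/3` (odd `n`).
-/

open Finset Filter Topology

lemma e00_intCast_div (a : ℤ) {M : ℕ} (hM : 0 < M) :
    e00 (a / M) = ((max (min a (M - a)) 0 : ℤ) : ℝ) / M := by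
  have hM' : (0 : ℝ) < M := by exact_mod_cast hM
  have h1 : 1 - (a : ℝ) / M = ((M - a : ℤ) : ℝ) / M := by push_cast; field_simp
  rw [e00, h1, min_div_div_right hM'.le, ← zero_div (M : ℝ), max_div_div_right hM'.le]
  push_cast
  rfl

lemma e00_intCast (a : ℤ) : e00 a = 0 := by
  have := e00_intCast_div a one_pos
  simp only [Nat.cast_one, div_one] at this
  rw [this]
  norm_cast
  omega

def tent (M j : ℕ) : ℕ := min (j % M) (M - j % M)

lemma sum_e00_div_sub {M N j : ℕ} (hM : 0 < M) (hj : j ≤ N * M) :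
    ∑ k ∈ range N, e00 ((j : ℝ) / M - k) = tent M j / M := by
  have harg (k : ℕ) : (j : ℝ) / M - k = ((j - k * M : ℤ) : ℝ) / M := by
    push_cast; field_simp
  simp only [harg, e00_intCast_div _ hM, ← sum_div, ← Int.cast_sum]
  congr 2
  have hjqr := Nat.div_add_mod' j M
  have hr := Nat.mod_lt j hM
  unfold tent
  set q := j / M
  set r := j % M
  have hterm (k : ℕ) : max (min ((j : ℤ) - k * M) (M - (j - k * M))) 0 =
      if k = q then ((min r (M - r) : ℕ) : ℤ) else 0 := by
    split_ifs with hk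
    · subst hk; push_cast [Nat.cast_sub hr.le] at hjqr ⊢; omega
    · rcases Nat.lt_or_gt_of_ne hk with hlt | hgt
      · have : (k + 1) * M ≤ q * M := Nat.mul_le_mul_right M hlt
        zify at this hjqr; rw [add_mul] at this; omega
      · have : (q + 1) * M ≤ k * M := Nat.mul_le_mul_right M hgt
        zify at this hjqr; rw [add_mul] at this; omega
  simp only [hterm, sum_ite_eq', mem_range]
  split_ifs with hq
  · rfl
  · have : N * M ≤ q * M := Nat.mul_le_mul_right M (not_lt.mp hq)
    have hr0 : r = 0 := by omega
    simp [hr0]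

lemma tent_two_mul_succ_sub {H : ℕ} (hH : 0 < H) (j : ℕ) :
    (tent (2 * H) (j + 1) : ℤ) - tent (2 * H) j = if j % (2 * H) < H then 1 else -1 := by
  have hr := Nat.mod_lt j (by omega : 0 < 2 * H)
  have hsucc : (j + 1) % (2 * H) = if j % (2 * H) + 1 = 2 * H then 0 else j % (2 * H) + 1 := by
    rw [Nat.add_mod, Nat.one_mod_eq_one.mpr (by omega)]
    split_ifs with h
    · rw [h, Nat.mod_self]
    · rw [Nat.mod_eq_of_lt (by omega)]
  unfold tent
  rw [hsucc]
  split_ifs <;> omega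

def bitSign (i j : ℕ) : ℝ := (-1) ^ (j / 2 ^ i)

lemma bitSign_eq_ite (i j : ℕ) : bitSign i j = if j % 2 ^ (i + 1) < 2 ^ i then 1 else -1 := by
  have hr := Nat.mod_lt j (by positivity : 0 < 2 ^ (i + 1))
  rw [bitSign, neg_one_pow_eq_pow_mod_two, ← Nat.mod_mul_right_div_self, ← pow_succ]
  split_ifs with h
  · rw [Nat.div_eq_of_lt h, pow_zero]
  · rw [Nat.div_eq_of_lt_le (k := 1) (by omega) (by rw [pow_succ] at hr; omega), pow_one]

lemma bitSign_mul_self (i j : ℕ) : bitSign i j * bitSign i j = 1 := by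
  rw [bitSign, ← pow_add, ← two_mul, pow_mul]
  norm_num

lemma sum_range_bitSign (i : ℕ) : ∑ s ∈ range (2 ^ (i + 1)), bitSign i s = 0 := by
  have hpos : 0 < 2 ^ i := by positivity
  have hlow (s) (hs : s ∈ range (2 ^ i)) : bitSign i s = 1 := by
    rw [bitSign, Nat.div_eq_of_lt (mem_range.mp hs), pow_zero]
  have hhigh (s) (hs : s ∈ range (2 ^ i)) : bitSign i (2 ^ i + s) = -1 := by
    rw [bitSign, Nat.add_div_left _ hpos, Nat.div_eq_of_lt (mem_range.mp hs)]
    norm_num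
  rw [pow_succ, mul_two, sum_range_add, sum_congr rfl hlow, sum_congr rfl hhigh]
  simp

lemma bitSign_block_add (i q s : ℕ) : bitSign i (q * 2 ^ (i + 1) + s) = bitSign i s := by
  rw [bitSign, bitSign, show q * 2 ^ (i + 1) + s = 2 ^ i * (2 * q) + s by ring,
    Nat.mul_add_div (by positivity), pow_add, pow_mul]
  norm_num

lemma bitSign_block_add_of_lt {i i' : ℕ} (h : i < i') (q : ℕ) {s : ℕ} (hs : s < 2 ^ (i + 1)) :
    bitSign i' (q * 2 ^ (i + 1) + s) = bitSign i' (q * 2 ^ (i + 1)) := by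
  have hsplit : 2 ^ i' = 2 ^ (i + 1) * 2 ^ (i' - (i + 1)) := by
    rw [← pow_add, Nat.add_sub_cancel' h]
  have hdiv (s) (hs : s < 2 ^ (i + 1)) :
      (q * 2 ^ (i + 1) + s) / 2 ^ i' = q / 2 ^ (i' - (i + 1)) := by
    rw [hsplit, ← Nat.div_div_eq_div_mul, mul_comm, Nat.mul_add_div (by positivity),
      Nat.div_eq_of_lt hs, add_zero]
  rw [bitSign, bitSign, hdiv s hs, ← hdiv 0 (by positivity), add_zero]

lemma abs_sum_range_le_of_sum_block_eq_zero (f : ℕ → ℝ) {P : ℕ} (hP : 0 < P)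
    (hblock : ∀ q, ∑ s ∈ range P, f (q * P + s) = 0) (hf : ∀ j, |f j| ≤ 1) (K : ℕ) :
    |∑ j ∈ range K, f j| ≤ P := by
  have hfull (Q : ℕ) : ∑ j ∈ range (Q * P), f j = 0 := by
    induction Q with
    | zero => simp
    | succ Q ih => rw [add_one_mul, sum_range_add, ih, hblock, add_zero]
  calc |∑ j ∈ range K, f j|
      = |∑ s ∈ range (K % P), f (K / P * P + s)| := by
        rw [← Nat.div_add_mod' K P, sum_range_add, hfull, zero_add, Nat.div_add_mod']
    _ ≤ ∑ s ∈ range (K % P), |f (K / P * P + s)| := abs_sum_le_sum_abs _ _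
    _ ≤ ∑ s ∈ range (K % P), 1 := sum_le_sum fun s _ => hf _
    _ ≤ P := by simpa using (Nat.mod_lt K hP).le

lemma abs_sum_bitSign_mul_le_of_lt {i i' : ℕ} (h : i < i') (K : ℕ) :
    |∑ j ∈ range K, bitSign i j * bitSign i' j| ≤ 2 ^ (i + 1) := by
  have hblock (q : ℕ) : ∑ s ∈ range (2 ^ (i + 1)),
      bitSign i (q * 2 ^ (i + 1) + s) * bitSign i' (q * 2 ^ (i + 1) + s) = 0 := by
    rw [sum_congr rfl fun s hs => by
      rw [bitSign_block_add, bitSign_block_add_of_lt h q (mem_range.mp hs)], ← sum_mul,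
      sum_range_bitSign, zero_mul]
  exact_mod_cast abs_sum_range_le_of_sum_block_eq_zero _ (by positivity) hblock
    (fun j => by simp [bitSign]) K

lemma abs_sum_bitSign_mul_le {i i' : ℕ} (h : i ≠ i') (K : ℕ) :
    |∑ j ∈ range K, bitSign i j * bitSign i' j| ≤ min (2 ^ (i + 1)) (2 ^ (i' + 1)) := by
  rcases Nat.lt_or_gt_of_ne h with hlt | hlt
  · rw [min_eq_left (pow_le_pow_right₀ one_le_two (by omega))]
    exact abs_sum_bitSign_mul_le_of_lt hlt K
  · rw [min_eq_right (pow_le_pow_right₀ one_le_two (by omega)),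
      sum_congr rfl fun j _ => mul_comm _ _]
    exact abs_sum_bitSign_mul_le_of_lt hlt K

lemma abs_sum_sq_sum_sub_le {ι : Type*} [DecidableEq ι] (s : Finset ι) (a w : ι → ℝ)
    (σ : ι → ℕ → ℝ) (K : ℕ) (hσ : ∀ m j, σ m j * σ m j = 1) (hw : ∀ m, 0 ≤ w m)
    (hcross : ∀ m ∈ s, ∀ m' ∈ s, m ≠ m' →
      |∑ j ∈ range K, σ m j * σ m' j| ≤ min (w m) (w m')) :
    |∑ j ∈ range K, (∑ m ∈ s, a m * σ m j) ^ 2 - K * ∑ m ∈ s, a m ^ 2|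
      ≤ #s * ∑ m ∈ s, a m ^ 2 * w m := by
  set S : ι → ι → ℝ := fun m m' => ∑ j ∈ range K, σ m j * σ m' j
  have hexpand : ∑ j ∈ range K, (∑ m ∈ s, a m * σ m j) ^ 2
      = ∑ m ∈ s, (a m ^ 2 * K + ∑ m' ∈ s.erase m, a m * a m' * S m m') := by
    calc ∑ j ∈ range K, (∑ m ∈ s, a m * σ m j) ^ 2
        = ∑ m ∈ s, ∑ m' ∈ s, a m * a m' * S m m' := by
          rw [sum_congr rfl fun j _ => by rw [sq, sum_mul_sum]]
          simp only [S, mul_sum]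
          rw [sum_comm]
          refine sum_congr rfl fun m _ => ?_
          rw [sum_comm]
          exact sum_congr rfl fun m' _ => sum_congr rfl fun j _ => by ring
      _ = _ := sum_congr rfl fun m hm => by
          rw [← add_sum_erase _ _ hm]
          simp [S, hσ, sq]
  have hpair (m m' : ι) (hm : m ∈ s) (hm' : m' ∈ s.erase m) :
      |a m * a m' * S m m'| ≤ (a m ^ 2 * w m + a m' ^ 2 * w m') / 2 := by
    obtain ⟨hne, hm'⟩ := mem_erase.mp hm'
    have hS := hcross m hm m' hm' hne.symm
    have := min_le_left (w m) (w m')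
    have := min_le_right (w m) (w m')
    have := le_min (hw m) (hw m')
    rw [abs_mul, abs_mul]
    nlinarith [sq_nonneg (|a m| - |a m'|), abs_nonneg (S m m'), sq_abs (a m), sq_abs (a m'),
      mul_nonneg (abs_nonneg (a m)) (abs_nonneg (a m'))]
  rw [hexpand, sum_add_distrib, ← sum_mul, mul_comm, add_sub_cancel_left]
  calc |∑ m ∈ s, ∑ m' ∈ s.erase m, a m * a m' * S m m'|
      ≤ ∑ m ∈ s, ∑ m' ∈ s.erase m, (a m ^ 2 * w m + a m' ^ 2 * w m') / 2 :=
        (abs_sum_le_sum_abs _ _).trans <| sum_le_sum fun m hm =>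
          (abs_sum_le_sum_abs _ _).trans <| sum_le_sum fun m' hm' => hpair m m' hm hm'
    _ ≤ ∑ m ∈ s, ∑ m' ∈ s, (a m ^ 2 * w m + a m' ^ 2 * w m') / 2 :=
        sum_le_sum fun m _ => sum_le_sum_of_subset_of_nonneg (erase_subset _ _)
          fun m' _ _ => by have := hw m; have := hw m'; positivity
    _ = #s * ∑ m ∈ s, a m ^ 2 * w m := by
        simp only [← sum_div, sum_add_distrib, sum_const, nsmul_eq_mul, ← mul_sum]
        ring

noncomputable def schauderSeries (c : ℕ → ℝ) (t : ℝ) : ℝ :=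
  ∑' m : ℕ, ∑ k ∈ range (2 ^ m), c m * e m k t

lemma sum_e_dyadic (m : ℕ) {n j : ℕ} (hj : j ≤ 2 ^ n) :
    ∑ k ∈ range (2 ^ m), e m k (j * 2 ^ (-(n : ℤ))) =
      if m < n then (2 : ℝ) ^ (-(m : ℝ) / 2) * (tent (2 ^ (n - m)) j / 2 ^ (n - m)) else 0 := by
  simp only [e, ← mul_sum, Int.cast_natCast]
  split_ifs with hmn
  · have harg (k : ℕ) :
        (2 : ℝ) ^ m * (j * 2 ^ (-(n : ℤ))) - k = (j : ℝ) / (2 ^ (n - m) : ℕ) - k := by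
      have h : (2 : ℝ) ^ n = 2 ^ m * 2 ^ (n - m) := by rw [← pow_add, Nat.add_sub_cancel' hmn.le]
      rw [zpow_neg, zpow_natCast, Nat.cast_pow, Nat.cast_ofNat, h]
      field_simp
    simp only [harg]
    rw [sum_e00_div_sub (by positivity) (by rwa [← pow_add, Nat.add_sub_cancel' hmn.le])]
    push_cast
    rfl
  · have harg (k : ℕ) :
        (2 : ℝ) ^ m * (j * 2 ^ (-(n : ℤ))) - k = ((j * 2 ^ (m - n) - k : ℤ) : ℝ) := by
      have h : (2 : ℝ) ^ m = 2 ^ n * 2 ^ (m - n) := by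
        rw [← pow_add, Nat.add_sub_cancel' (not_lt.mp hmn)]
      rw [zpow_neg, zpow_natCast, h]
      push_cast
      field_simp
    simp only [harg, e00_intCast, sum_const_zero, mul_zero]

lemma schauderSeries_dyadic (c : ℕ → ℝ) {n j : ℕ} (hj : j ≤ 2 ^ n) :
    schauderSeries c (j * 2 ^ (-(n : ℤ))) =
      ∑ m ∈ range n, c m * ((2 : ℝ) ^ (-(m : ℝ) / 2) * (tent (2 ^ (n - m)) j / 2 ^ (n - m))) := by
  have hlevel (m : ℕ) : ∑ k ∈ range (2 ^ m), c m * e m k (j * 2 ^ (-(n : ℤ))) =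
      if m < n then c m * ((2 : ℝ) ^ (-(m : ℝ) / 2) * (tent (2 ^ (n - m)) j / 2 ^ (n - m)))
      else 0 := by
    rw [← mul_sum, sum_e_dyadic m hj]
    split_ifs <;> simp
  rw [schauderSeries, tsum_eq_sum (s := range n) fun m hm => by
    rw [hlevel, if_neg (by simpa using hm)]]
  exact sum_congr rfl fun m hm => by rw [hlevel, if_pos (mem_range.mp hm)]

lemma schauderSeries_add_dyadic (c c' : ℕ → ℝ) {n j : ℕ} (hj : j ≤ 2 ^ n) :
    schauderSeries c (j * 2 ^ (-(n : ℤ))) + schauderSeries c' (j * 2 ^ (-(n : ℤ))) =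
      schauderSeries (c + c') (j * 2 ^ (-(n : ℤ))) := by
  simp only [schauderSeries_dyadic _ hj, ← sum_add_distrib, Pi.add_apply, add_mul]

lemma tent_two_pow_succ_sub (i j : ℕ) :
    (tent (2 ^ (i + 1)) (j + 1) : ℝ) - tent (2 ^ (i + 1)) j = bitSign i j := by
  rw [bitSign_eq_ite, pow_succ']
  exact_mod_cast tent_two_mul_succ_sub (by positivity) j

noncomputable def dyadicSlope (c : ℕ → ℝ) (n m : ℕ) : ℝ :=
  c m * (2 : ℝ) ^ (-(m : ℝ) / 2) / 2 ^ (n - m)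

lemma schauderSeries_dyadic_succ_sub (c : ℕ → ℝ) {n j : ℕ} (hj : j < 2 ^ n) :
    schauderSeries c ((j + 1) * 2 ^ (-(n : ℤ))) - schauderSeries c (j * 2 ^ (-(n : ℤ))) =
      ∑ m ∈ range n, dyadicSlope c n m * bitSign (n - 1 - m) j := by
  rw [← Nat.cast_succ, schauderSeries_dyadic c hj, schauderSeries_dyadic c hj.le,
    ← sum_sub_distrib]
  refine sum_congr rfl fun m hm => ?_
  have hnm : n - m = n - 1 - m + 1 := by have := mem_range.mp hm; omega
  rw [dyadicSlope, ← tent_two_pow_succ_sub, ← hnm]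
  ring

lemma qv_congr {z z' : ℝ → ℝ} {n : ℕ} (t : ℝ)
    (h : ∀ j : ℕ, j ≤ 2 ^ n → z (j * 2 ^ (-(n : ℤ))) = z' (j * 2 ^ (-(n : ℤ)))) :
    qv z n t = qv z' n t := by
  refine sum_congr rfl fun j hj => ?_
  have hj := mem_range.mp hj
  rw [← Nat.cast_succ, h j hj.le, h (j + 1) hj]

lemma qv_eq_sum_range (z : ℝ → ℝ) (n : ℕ) {t : ℝ} (ht : 0 ≤ t) :
    qv z n t = ∑ j ∈ range (min (⌊t * 2 ^ n⌋₊ + 1) (2 ^ n)),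
      (z ((j + 1) * 2 ^ (-(n : ℤ))) - z (j * 2 ^ (-(n : ℤ)))) ^ 2 := by
  have hcond (j : ℕ) : (j : ℝ) * 2 ^ (-(n : ℤ)) ≤ t ↔ j < ⌊t * 2 ^ n⌋₊ + 1 := by
    rw [Nat.lt_succ_iff, Nat.le_floor_iff (by positivity), zpow_neg, zpow_natCast,
      ← div_eq_mul_inv, div_le_iff₀ (by positivity)]
  rw [qv, ← sum_filter]
  congr 1
  ext j
  simp only [mem_filter, mem_range, hcond]
  omega

lemma abs_min_floor_add_one_sub_le {t : ℝ} (ht0 : 0 ≤ t) (ht1 : t ≤ 1) (n : ℕ) :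
    |(min (⌊t * 2 ^ n⌋₊ + 1) (2 ^ n) : ℕ) - t * 2 ^ n| ≤ 1 := by
  have hfl : (⌊t * 2 ^ n⌋₊ : ℝ) ≤ t * 2 ^ n := Nat.floor_le (by positivity)
  have hfu : t * 2 ^ n < ⌊t * 2 ^ n⌋₊ + 1 := Nat.lt_floor_add_one _
  have htn : t * 2 ^ n ≤ 2 ^ n := mul_le_of_le_one_left (by positivity) ht1
  rw [abs_le, Nat.cast_min]
  push_cast
  constructor
  · rcases min_cases ((⌊t * 2 ^ n⌋₊ : ℝ) + 1) (2 ^ n) with ⟨h, _⟩ | ⟨h, _⟩ <;> rw [h] <;> linarith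
  · linarith [min_le_left ((⌊t * 2 ^ n⌋₊ : ℝ) + 1) (2 ^ n)]

noncomputable def schauderEnergy (c : ℕ → ℝ) (n : ℕ) : ℝ :=
  (∑ m ∈ range n, c m ^ 2 * 2 ^ m) / 2 ^ n

lemma schauderEnergy_nonneg (c : ℕ → ℝ) (n : ℕ) : 0 ≤ schauderEnergy c n := by
  unfold schauderEnergy
  positivity

lemma schauderEnergy_le {c : ℕ → ℝ} {C : ℝ} (hc : ∀ m, c m ^ 2 ≤ C) (n : ℕ) :
    schauderEnergy c n ≤ C := by
  have hC : 0 ≤ C := (sq_nonneg _).trans (hc 0)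
  rw [schauderEnergy, div_le_iff₀ (by positivity)]
  calc ∑ m ∈ range n, c m ^ 2 * 2 ^ m ≤ ∑ m ∈ range n, C * 2 ^ m :=
        sum_le_sum fun m _ => by gcongr; exact hc m
    _ = C * (2 ^ n - 1) := by rw [← mul_sum, geom_sum_eq (by norm_num)]; norm_num
    _ ≤ C * 2 ^ n := by nlinarith

lemma rpow_neg_half_sq (m : ℕ) : ((2 : ℝ) ^ (-(m : ℝ) / 2)) ^ 2 = (2 ^ m)⁻¹ := by
  rw [← Real.rpow_natCast, ← Real.rpow_mul (by norm_num), Nat.cast_ofNat,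
    div_mul_cancel₀ _ two_ne_zero, Real.rpow_neg (by norm_num), Real.rpow_natCast]

lemma sq_dyadicSlope (c : ℕ → ℝ) {n m : ℕ} (hm : m ≤ n) :
    dyadicSlope c n m ^ 2 = c m ^ 2 * 2 ^ m / 2 ^ n / 2 ^ n := by
  have hpow : (2 : ℝ) ^ n = 2 ^ m * 2 ^ (n - m) := by rw [← pow_add, Nat.add_sub_cancel' hm]
  simp only [dyadicSlope, div_pow, mul_pow, rpow_neg_half_sq, hpow]
  field_simp

lemma sq_dyadicSlope_mul_two_pow (c : ℕ → ℝ) {n m : ℕ} (hm : m ≤ n) :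
    dyadicSlope c n m ^ 2 * 2 ^ (n - m) = c m ^ 2 / 2 ^ n := by
  have hpow : (2 : ℝ) ^ n = 2 ^ m * 2 ^ (n - m) := by rw [← pow_add, Nat.add_sub_cancel' hm]
  rw [sq_dyadicSlope c hm, hpow]
  field_simp

lemma sum_sq_dyadicSlope (c : ℕ → ℝ) (n : ℕ) :
    ∑ m ∈ range n, dyadicSlope c n m ^ 2 = schauderEnergy c n / 2 ^ n := by
  rw [sum_congr rfl fun m hm => sq_dyadicSlope c (mem_range.mp hm).le, ← sum_div, ← sum_div,
    schauderEnergy]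

lemma abs_qv_schauderSeries_sub_le {c : ℕ → ℝ} {C : ℝ} (hc : ∀ m, c m ^ 2 ≤ C) {t : ℝ}
    (ht0 : 0 ≤ t) (ht1 : t ≤ 1) (n : ℕ) :
    |qv (schauderSeries c) n t - t * schauderEnergy c n| ≤ C * (n ^ 2 + 1) / 2 ^ n := by
  set K := min (⌊t * 2 ^ n⌋₊ + 1) (2 ^ n)
  set a := dyadicSlope c n
  have hincr : qv (schauderSeries c) n t =
      ∑ j ∈ range K, (∑ m ∈ range n, a m * bitSign (n - 1 - m) j) ^ 2 := by
    rw [qv_eq_sum_range _ n ht0]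
    refine sum_congr rfl fun j hj => ?_
    rw [schauderSeries_dyadic_succ_sub c ((mem_range.mp hj).trans_le (min_le_right _ _))]
  have hquad := abs_sum_sq_sum_sub_le (range n) a (fun m => 2 ^ (n - m))
    (fun m j => bitSign (n - 1 - m) j) K (fun _ _ => bitSign_mul_self _ _) (fun _ => by positivity)
    fun m hm m' hm' hne => by
      have := mem_range.mp hm
      have := mem_range.mp hm'
      have hcross := abs_sum_bitSign_mul_le (i := n - 1 - m) (i' := n - 1 - m') (by omega) K
      rwa [show n - 1 - m + 1 = n - m by omega, show n - 1 - m' + 1 = n - m' by omega] at hcross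
  have hoff : (#(range n) : ℝ) * ∑ m ∈ range n, a m ^ 2 * 2 ^ (n - m) ≤ C * n ^ 2 / 2 ^ n := by
    rw [sum_congr rfl fun m hm => sq_dyadicSlope_mul_two_pow c (mem_range.mp hm).le, card_range]
    calc (n : ℝ) * ∑ m ∈ range n, c m ^ 2 / 2 ^ n ≤ n * ∑ m ∈ range n, C / 2 ^ n := by
          gcongr with m; exact hc m
      _ = C * n ^ 2 / 2 ^ n := by simp; ring
  have hdiag : |K * ∑ m ∈ range n, a m ^ 2 - t * schauderEnergy c n| ≤ C / 2 ^ n := by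
    have hE : 0 ≤ schauderEnergy c n / 2 ^ n :=
      div_nonneg (schauderEnergy_nonneg c n) (by positivity)
    rw [sum_sq_dyadicSlope, show (K : ℝ) * (schauderEnergy c n / 2 ^ n) - t * schauderEnergy c n
      = (K - t * 2 ^ n) * (schauderEnergy c n / 2 ^ n) by field_simp, abs_mul, abs_of_nonneg hE]
    calc |(K : ℝ) - t * 2 ^ n| * (schauderEnergy c n / 2 ^ n) ≤ 1 * (C / 2 ^ n) :=
          mul_le_mul (abs_min_floor_add_one_sub_le ht0 ht1 n)
            (by gcongr; exact schauderEnergy_le hc n) hE zero_le_one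
      _ = C / 2 ^ n := one_mul _
  calc |qv (schauderSeries c) n t - t * schauderEnergy c n|
      ≤ |qv (schauderSeries c) n t - K * ∑ m ∈ range n, a m ^ 2|
        + |K * ∑ m ∈ range n, a m ^ 2 - t * schauderEnergy c n| := abs_sub_le _ _ _
    _ ≤ C * n ^ 2 / 2 ^ n + C / 2 ^ n := by rw [hincr]; gcongr; exact hquad.trans hoff
    _ = C * (n ^ 2 + 1) / 2 ^ n := by ring

lemma tendsto_qv_schauderSeries_sub {c : ℕ → ℝ} {C : ℝ} (hc : ∀ m, c m ^ 2 ≤ C) {t : ℝ}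
    (ht0 : 0 ≤ t) (ht1 : t ≤ 1) :
    Tendsto (fun n => qv (schauderSeries c) n t - t * schauderEnergy c n) atTop (𝓝 0) := by
  have hbound : Tendsto (fun n : ℕ => C * (n ^ 2 + 1) / 2 ^ n) atTop (𝓝 0) := by
    have h2 := tendsto_pow_const_div_const_pow_of_one_lt 2 (one_lt_two : (1 : ℝ) < 2)
    have h0 := tendsto_pow_const_div_const_pow_of_one_lt 0 (one_lt_two : (1 : ℝ) < 2)
    convert (h2.add h0).const_mul C using 2 with n
    · ring
    · simp
  exact squeeze_zero_norm (fun n => abs_qv_schauderSeries_sub_le hc ht0 ht1 n) hbound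

lemma tendsto_qv_schauderSeries_comp {c : ℕ → ℝ} {C : ℝ} (hc : ∀ m, c m ^ 2 ≤ C) {t : ℝ}
    (ht0 : 0 ≤ t) (ht1 : t ≤ 1) {φ : ℕ → ℕ} (hφ : Tendsto φ atTop atTop) {L : ℝ}
    (hE : Tendsto (fun k => schauderEnergy c (φ k)) atTop (𝓝 L)) :
    Tendsto (fun k => qv (schauderSeries c) (φ k) t) atTop (𝓝 (L * t)) := by
  simpa [mul_comm L] using ((tendsto_qv_schauderSeries_sub hc ht0 ht1).comp hφ).add
    (hE.const_mul t)

lemma schauderEnergy_of_sq_eq_one {c : ℕ → ℝ} (hc : ∀ m, c m ^ 2 = 1) (n : ℕ) :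
    schauderEnergy c n = 1 - (1 / 2) ^ n := by
  simp only [schauderEnergy, hc, one_mul]
  rw [geom_sum_eq (by norm_num), one_div_pow]
  field_simp
  ring

lemma tendsto_schauderEnergy_of_sq_eq_one {c : ℕ → ℝ} (hc : ∀ m, c m ^ 2 = 1) :
    Tendsto (schauderEnergy c) atTop (𝓝 1) := by
  simp only [funext (schauderEnergy_of_sq_eq_one hc)]
  simpa using (tendsto_pow_atTop_nhds_zero_of_lt_one (by norm_num : (0 : ℝ) ≤ 1 / 2)
    (by norm_num)).const_sub 1

lemma sum_range_two_mul_one_add_neg_one_pow_sq (k : ℕ) :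
    ∑ m ∈ range (2 * k), (1 + (-1 : ℝ) ^ m) ^ 2 * 2 ^ m = 4 / 3 * (4 ^ k - 1) := by
  induction k with
  | zero => simp
  | succ k ih =>
    rw [mul_add_one, sum_range_succ, sum_range_succ, ih, pow_succ _ (2 * k), pow_mul, pow_mul]
    norm_num
    ring

lemma tendsto_schauderEnergy_two_mul :
    Tendsto (fun k => schauderEnergy (fun m => 1 + (-1) ^ m) (2 * k)) atTop (𝓝 (4 / 3)) := by
  have h (k : ℕ) :
      schauderEnergy (fun m => 1 + (-1) ^ m) (2 * k) = 4 / 3 - 4 / 3 * (1 / 4) ^ k := by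
    rw [schauderEnergy, sum_range_two_mul_one_add_neg_one_pow_sq, pow_mul, one_div_pow]
    field_simp
    ring
  simp only [h]
  simpa using ((tendsto_pow_atTop_nhds_zero_of_lt_one (by norm_num : (0 : ℝ) ≤ 1 / 4)
    (by norm_num)).const_mul (4 / 3)).const_sub (4 / 3)

lemma tendsto_schauderEnergy_two_mul_add_one :
    Tendsto (fun k => schauderEnergy (fun m => 1 + (-1) ^ m) (2 * k + 1)) atTop (𝓝 (8 / 3)) := by
  have h (k : ℕ) :
      schauderEnergy (fun m => 1 + (-1) ^ m) (2 * k + 1) = 8 / 3 - 2 / 3 * (1 / 4) ^ k := by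
    have h4 : (2 : ℝ) ^ (2 * k) = 4 ^ k := by rw [pow_mul]; norm_num
    rw [schauderEnergy, sum_range_succ, sum_range_two_mul_one_add_neg_one_pow_sq,
      pow_succ (2 : ℝ), h4, (even_two_mul k).neg_one_pow, one_div_pow]
    field_simp
    ring
  simp only [h]
  simpa using ((tendsto_pow_atTop_nhds_zero_of_lt_one (by norm_num : (0 : ℝ) ≤ 1 / 4)
    (by norm_num)).const_mul (2 / 3)).const_sub (8 / 3)

lemma tendsto_qv_schauderSeries_of_sq_eq_one {c : ℕ → ℝ} (hc : ∀ m, c m ^ 2 = 1) {t : ℝ}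
    (ht0 : 0 ≤ t) (ht1 : t ≤ 1) : Tendsto (fun n => qv (schauderSeries c) n t) atTop (𝓝 t) := by
  simpa using tendsto_qv_schauderSeries_comp (fun m => (hc m).le) ht0 ht1 tendsto_id
    (tendsto_schauderEnergy_of_sq_eq_one hc)

theorem stmt_19 :
    (∀ t ∈ Set.Icc (0 : ℝ) 1,
      Filter.Tendsto (fun n => qv (xhat + yfun) (2 * n) t) Filter.atTop
        (nhds ((4 / 3) * t)) ∧
      Filter.Tendsto (fun n => qv (xhat + yfun) (2 * n + 1) t) Filter.atTop
        (nhds ((8 / 3) * t))) ∧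
    (∀ t ∈ Set.Icc (0 : ℝ) 1,
      Filter.Tendsto (fun n => qv xhat n t) Filter.atTop (nhds t) ∧
      Filter.Tendsto (fun n => qv yfun n t) Filter.atTop (nhds t)) ∧
    (∀ t ∈ Set.Ioc (0 : ℝ) 1,
      ¬ ∃ L : ℝ, Filter.Tendsto (fun n => qv (xhat + yfun) n t) Filter.atTop (nhds L)) := by
  have hx : xhat = schauderSeries 1 := by
    funext t
    simp [xhat, schauderSeries]
  have hy : yfun = schauderSeries fun m => (-1) ^ m := rfl
  have hxy (n : ℕ) (t : ℝ) :
      qv (xhat + yfun) n t = qv (schauderSeries fun m => 1 + (-1) ^ m) n t :=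
    qv_congr t fun j hj => by rw [Pi.add_apply, hx, hy, schauderSeries_add_dyadic _ _ hj]; rfl
  have hc (m : ℕ) : (1 + (-1 : ℝ) ^ m) ^ 2 ≤ 4 := by
    rcases neg_one_pow_eq_or ℝ m with h | h <;> rw [h] <;> norm_num
  have hφ₀ : Tendsto (fun n : ℕ => 2 * n) atTop atTop :=
    StrictMono.tendsto_atTop fun _ _ h => by omega
  have hφ₁ : Tendsto (fun n : ℕ => 2 * n + 1) atTop atTop :=
    StrictMono.tendsto_atTop fun _ _ h => by omega
  have heven (t : ℝ) (ht : t ∈ Set.Icc (0 : ℝ) 1) :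
      Tendsto (fun n => qv (xhat + yfun) (2 * n) t) atTop (𝓝 (4 / 3 * t)) := by
    simpa only [hxy] using
      tendsto_qv_schauderSeries_comp hc ht.1 ht.2 hφ₀ tendsto_schauderEnergy_two_mul
  have hodd (t : ℝ) (ht : t ∈ Set.Icc (0 : ℝ) 1) :
      Tendsto (fun n => qv (xhat + yfun) (2 * n + 1) t) atTop (𝓝 (8 / 3 * t)) := by
    simpa only [hxy] using
      tendsto_qv_schauderSeries_comp hc ht.1 ht.2 hφ₁ tendsto_schauderEnergy_two_mul_add_one
  refine ⟨fun t ht => ⟨heven t ht, hodd t ht⟩, fun t ht => ⟨?_, ?_⟩, ?_⟩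
  · rw [hx]
    exact tendsto_qv_schauderSeries_of_sq_eq_one (fun _ => one_pow 2) ht.1 ht.2
  · exact tendsto_qv_schauderSeries_of_sq_eq_one (fun _ => by simp [← pow_mul]) ht.1 ht.2
  · rintro t ⟨ht0, ht1⟩ ⟨L, hL⟩
    have h4 := tendsto_nhds_unique (hL.comp hφ₀) (heven t ⟨ht0.le, ht1⟩)
    have h8 := tendsto_nhds_unique (hL.comp hφ₁) (hodd t ⟨ht0.le, ht1⟩)
    linarith
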